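/- arXiv:1408.1764 — 3 statements merged into one kernel-verified Lean document; each statement's English description precedes it below -/
import Mathlib

section
/- For the single-cell subproblem with value τ_ℓ(f) (minimize ∫_{C_ℓ} (D − x(ξ))/S_ℓ(ξ) λ(dξ) subject to 0 ≤ x ≤ D and ∫_{C_ℓ} x(ξ)/R_ℓ(ξ) λ(dξ) ≤ f), the left derivative of τ_ℓ at f satisfies (τ_ℓ)'_−(f) ≤ −ρ_ℓ(f) and the right derivative satisfies (τ_ℓ)'_+(f) ≥ −ρ_ℓ(f), where ρ_ℓ(f) = sup{x : ∫_{{ρ_ℓ > x}} (D/R_ℓ) dλ > f}. -/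
/-!
Push the measure with density `D / R` forward along the rate ratio `ρ = R / S`; the resulting
finite measure `m` on `ℝ` has `m (Ioi t) = ∫_{ρ > t} D / R`, and `l = ρ_ℓ(f)` is its survival
quantile at level `f`. Continuity of `m` from below and above gives
`m (Ioi l) ≤ f ≤ m (Ici l)`, so the allocation serving fully the points with `ρ > l`, a suitable
fraction of those with `ρ = l` and nothing else spends exactly the budget `f`. Pointwise it
minimises the Lagrangian `(D - x) / S + l * x / R`, hence `τ g ≥ τ f - l (g - f)` for all `g ≥ 0`:
`-l` is a subgradient of `τ` at `f`, which bounds both difference quotients.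
-/

open MeasureTheory Set

lemma iUnion_Ioi_add_one_div (l : ℝ) : ⋃ n : ℕ, Ioi (l + 1 / (n + 1)) = Ioi l := by
  ext x
  simp only [mem_iUnion, mem_Ioi]
  refine ⟨fun ⟨n, hn⟩ => lt_trans (by simp; positivity) hn, fun hx => ?_⟩
  obtain ⟨n, hn⟩ := exists_nat_one_div_lt (sub_pos.2 hx)
  exact ⟨n, by linarith⟩

lemma iInter_Ioi_sub_one_div (l : ℝ) : ⋂ n : ℕ, Ioi (l - 1 / (n + 1)) = Ici l := by
  ext x
  simp only [mem_iInter, mem_Ioi, mem_Ici]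
  refine ⟨fun hx => le_of_not_gt fun hxl => ?_,
    fun hx n => lt_of_lt_of_le (by simp; positivity) hx⟩
  obtain ⟨n, hn⟩ := exists_nat_one_div_lt (sub_pos.2 hxl)
  linarith [hx n]

lemma slope_le_and_le_slope_of_supporting_line {φ : ℝ → ℝ} {f c : ℝ} (hf : 0 ≤ f)
    (h : ∀ g, 0 ≤ g → φ f + c * (g - f) ≤ φ g) :
    (∀ g, 0 ≤ g → g < f → (φ f - φ g) / (f - g) ≤ c) ∧
      (∀ g, f < g → c ≤ (φ g - φ f) / (g - f)) := by
  refine ⟨fun g hg hgf => ?_, fun g hfg => ?_⟩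
  · rw [div_le_iff₀ (sub_pos.2 hgf)]
    linarith [h g hg]
  · rw [le_div_iff₀ (sub_pos.2 hfg)]
    linarith [h g (hf.trans hfg.le)]

lemma exists_mem_Icc_add_mul_eq {a b f : ℝ} (hb : 0 ≤ b) (hlo : a ≤ f) (hhi : f ≤ a + b) :
    ∃ α ∈ Icc (0 : ℝ) 1, a + α * b = f := by
  rcases hb.eq_or_lt with rfl | hb
  · exact ⟨0, left_mem_Icc.2 zero_le_one, by linarith⟩
  refine ⟨(f - a) / b, ⟨div_nonneg (by linarith) hb.le, div_le_one_of_le₀ (by linarith) hb.le⟩,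
    ?_⟩
  rw [div_mul_cancel₀ _ hb.ne']
  ring

lemma sub_div_add_mul_div_le_of_threshold {r s l D u y : ℝ} (hr : 0 < r) (hs : 0 < s)
    (hy : 0 ≤ y ∧ y ≤ D) (hup : l < r / s → u = D) (hlo : r / s < l → u = 0) :
    (D - u) / s + l * (u / r) ≤ (D - y) / s + l * (y / r) := by
  have key : (D - y) / s + l * (y / r) - ((D - u) / s + l * (u / r))
      = (y - u) * (l * s - r) / (r * s) := by
    field_simp
    ring
  rw [← sub_nonneg, key]
  refine div_nonneg ?_ (mul_pos hr hs).le
  rcases lt_trichotomy (r / s) l with h | h | h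
  · rw [hlo h, sub_zero]
    exact mul_nonneg hy.1 (by rw [div_lt_iff₀ hs] at h; linarith)
  · rw [← h, div_mul_cancel₀ _ hs.ne', sub_self, mul_zero]
  · rw [hup h]
    exact mul_nonneg_of_nonpos_of_nonpos (by linarith) (by rw [lt_div_iff₀ hs] at h; linarith)

noncomputable def thresholdAllocation {X : Type*} (ρ : X → ℝ) (l α D : ℝ) : X → ℝ :=
  (ρ ⁻¹' Ioi l).indicator (fun _ => D) + (ρ ⁻¹' {l}).indicator (fun _ => α * D)

section thresholdAllocation

variable {X : Type*} {ρ : X → ℝ} {l α D : ℝ}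

lemma thresholdAllocation_mem_Icc (hD : 0 ≤ D) (hα : α ∈ Icc 0 1) (ξ : X) :
    0 ≤ thresholdAllocation ρ l α D ξ ∧ thresholdAllocation ρ l α D ξ ≤ D := by
  rcases lt_trichotomy l (ρ ξ) with h | h | h
  · simp [thresholdAllocation, h, h.ne', hD]
  · simp [thresholdAllocation, h, mul_nonneg hα.1 hD, mul_le_of_le_one_left hD hα.2]
  · simp [thresholdAllocation, h.le.not_gt, h.ne, hD]

lemma thresholdAllocation_eq_of_lt {ξ : X} (h : l < ρ ξ) : thresholdAllocation ρ l α D ξ = D := by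
  simp [thresholdAllocation, h, h.ne']

lemma thresholdAllocation_eq_zero_of_lt {ξ : X} (h : ρ ξ < l) : thresholdAllocation ρ l α D ξ = 0 := by
  simp [thresholdAllocation, h.le.not_gt, h.ne]

end thresholdAllocation

namespace MeasureTheory

section survivalQuantile

variable {m : Measure ℝ} [IsFiniteMeasure m] {l c : ℝ}

lemma measureReal_Ioi_le_of_forall_gt (h : ∀ t, l < t → m.real (Ioi t) ≤ c) :
    m.real (Ioi l) ≤ c := by
  have hmono : Monotone fun n : ℕ => Ioi (l + 1 / (n + 1)) := fun i j hij =>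
    Ioi_subset_Ioi (by gcongr)
  have hlim := tendsto_measure_iUnion_atTop (μ := m) hmono
  rw [iUnion_Ioi_add_one_div] at hlim
  replace hlim := (ENNReal.tendsto_toReal (measure_ne_top m (Ioi l))).comp hlim
  exact le_of_tendsto' hlim fun n => h _ (by simp; positivity)

lemma le_measureReal_Ici_of_forall_lt (h : ∀ t < l, c ≤ m.real (Ioi t)) :
    c ≤ m.real (Ici l) := by
  have hanti : Antitone fun n : ℕ => Ioi (l - 1 / (n + 1)) := fun i j hij =>
    Ioi_subset_Ioi (by gcongr)
  have hlim := tendsto_measure_iInter_atTop (μ := m)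
    (fun _ => measurableSet_Ioi.nullMeasurableSet) hanti ⟨0, measure_ne_top _ _⟩
  rw [iInter_Ioi_sub_one_div] at hlim
  replace hlim := (ENNReal.tendsto_toReal (measure_ne_top m (Ici l))).comp hlim
  exact ge_of_tendsto' hlim fun n => h _ (by simp; positivity)

noncomputable def survivalQuantile (m : Measure ℝ) (f : ℝ) : ℝ :=
  sSup {t | f < m.real (Ioi t)}

theorem survivalQuantile_spec (hm0 : m (Iic 0) = 0) {T : ℝ} (hmT : m (Ioi T) = 0) {f : ℝ}
    (hf0 : 0 ≤ f) (hf : f ≤ m.real univ) :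
    0 ≤ survivalQuantile m f ∧ m.real (Ioi (survivalQuantile m f)) ≤ f ∧
      f ≤ m.real (Ici (survivalQuantile m f)) := by
  set L := {t | f < m.real (Ioi t)}
  have htot : ∀ t ≤ 0, m.real (Ioi t) = m.real univ := fun t ht =>
    measureReal_congr (ae_eq_univ.2 (measure_mono_null (by simpa using Iic_subset_Iic.2 ht) hm0))
  have hbdd : BddAbove L := ⟨T, fun t ht => le_of_not_gt fun hTt => by
    have : m.real (Ioi t) ≤ m.real (Ioi T) := measureReal_mono (Ioi_subset_Ioi hTt.le)
    simp only [measureReal_def, hmT, ENNReal.toReal_zero] at this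
    exact (ht.trans_le (this.trans hf0)).false⟩
  by_cases h0 : (0 : ℝ) ∈ L
  · refine ⟨le_csSup hbdd h0, measureReal_Ioi_le_of_forall_gt fun t ht => ?_,
      le_measureReal_Ici_of_forall_lt fun t ht => ?_⟩
    · exact le_of_not_gt (notMem_of_csSup_lt ht hbdd : t ∉ L)
    · obtain ⟨s, hs, hts⟩ := exists_lt_of_lt_csSup ⟨0, h0⟩ ht
      exact hs.le.trans (measureReal_mono (Ioi_subset_Ioi hts.le))
  · have hL : L = ∅ := eq_empty_of_forall_notMem fun s hs => h0 <|
      hs.trans_le ((measureReal_mono (subset_univ _)).trans (htot 0 le_rfl).ge)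
    have hq : survivalQuantile m f = 0 := by simp [survivalQuantile, L, hL]
    rw [hq]
    refine ⟨le_rfl, le_of_not_gt h0, hf.trans ?_⟩
    rw [← htot 0 le_rfl]
    exact measureReal_mono Ioi_subset_Ici_self

end survivalQuantile

variable {X β : Type*} [MeasurableSpace X] [MeasurableSpace β] {ν : Measure X}

lemma measureReal_map_withDensity_ofReal {w : X → ℝ} (hw : 0 ≤ᵐ[ν] w)
    (hwm : AEStronglyMeasurable w ν) {φ : X → β} (hφ : AEMeasurable φ ν) {A : Set β}
    (hA : MeasurableSet A) :
    ((ν.withDensity fun ξ => ENNReal.ofReal (w ξ)).map φ).real A = ∫ ξ in φ ⁻¹' A, w ξ ∂ν := by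
  rw [measureReal_def, Measure.map_apply_of_aemeasurable
    (hφ.mono_ac (withDensity_absolutelyContinuous _ _)) hA,
    withDensity_apply₀ _ (hφ.nullMeasurableSet_preimage hA),
    integral_eq_lintegral_of_nonneg_ae (ae_restrict_of_ae hw) hwm.restrict]

lemma map_withDensity_eq_zero {w : X → ENNReal} {φ : X → β} (hφ : AEMeasurable φ ν)
    {A : Set β} (hA : MeasurableSet A) (h : ∀ᵐ ξ ∂ν, φ ξ ∉ A) :
    (ν.withDensity w).map φ A = 0 := by
  rw [Measure.map_apply_of_aemeasurable
    (hφ.mono_ac (withDensity_absolutelyContinuous _ _)) hA]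
  exact withDensity_absolutelyContinuous _ _ (measure_eq_zero_iff_ae_notMem.2 h)

variable {D : ℝ} {R S : X → ℝ}

lemma integrable_div_of_mem_Icc {y : X → ℝ} (hy : Measurable y)
    (hyD : ∀ ξ, 0 ≤ y ξ ∧ y ξ ≤ D) (hR : ∀ᵐ ξ ∂ν, 0 < R ξ) (hRm : AEMeasurable R ν)
    (hDR : Integrable (fun ξ => D / R ξ) ν) : Integrable (fun ξ => y ξ / R ξ) ν := by
  refine hDR.mono (hy.aemeasurable.div hRm).aestronglyMeasurable ?_
  filter_upwards [hR] with ξ hξ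
  rw [Real.norm_eq_abs, Real.norm_eq_abs, abs_of_nonneg (div_nonneg (hyD ξ).1 hξ.le),
    abs_of_nonneg (div_nonneg ((hyD ξ).1.trans (hyD ξ).2) hξ.le)]
  exact div_le_div_of_nonneg_right (hyD ξ).2 hξ.le

lemma integrable_const_div_of_le [IsFiniteMeasure ν] (hD : 0 ≤ D) {c : ℝ} (hc : 0 < c)
    (hRm : AEMeasurable R ν) (hcR : ∀ᵐ ξ ∂ν, c ≤ R ξ) : Integrable (fun ξ => D / R ξ) ν := by
  refine .of_bound (aemeasurable_const.div hRm).aestronglyMeasurable (D / c) ?_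
  filter_upwards [hcR] with ξ hξ
  rw [Real.norm_eq_abs, abs_of_nonneg (div_nonneg hD (hc.trans_le hξ).le)]
  exact div_le_div_of_nonneg_left hD hc hξ

/-- The mass of `A` is the budget `∫ D / R` needed to serve fully every point whose rate ratio
`R / S` lies in `A`. -/
noncomputable def budgetDistribution (ν : Measure X) (D : ℝ) (R S : X → ℝ) : Measure ℝ :=
  (ν.withDensity fun ξ => ENNReal.ofReal (D / R ξ)).map fun ξ => R ξ / S ξ

lemma budgetDistribution_real_apply (hw : 0 ≤ᵐ[ν] fun ξ => D / R ξ) (hRm : AEMeasurable R ν)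
    (hSm : AEMeasurable S ν) {A : Set ℝ} (hA : MeasurableSet A) :
    (budgetDistribution ν D R S).real A = ∫ ξ in (fun ξ => R ξ / S ξ) ⁻¹' A, D / R ξ ∂ν :=
  measureReal_map_withDensity_ofReal hw (aemeasurable_const.div hRm).aestronglyMeasurable
    (φ := fun ξ => R ξ / S ξ) (hRm.div hSm) hA

lemma isFiniteMeasure_budgetDistribution (hDR : Integrable (fun ξ => D / R ξ) ν) :
    IsFiniteMeasure (budgetDistribution ν D R S) :=
  have := isFiniteMeasure_withDensity_ofReal hDR.2
  Measure.isFiniteMeasure_map _ _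

section thresholdAllocation

variable {ρ : X → ℝ} {l α : ℝ}

lemma measurable_thresholdAllocation (hρ : Measurable ρ) :
    Measurable (thresholdAllocation ρ l α D) :=
  (measurable_const.indicator (hρ measurableSet_Ioi)).add
    (measurable_const.indicator (hρ (measurableSet_singleton l)))

lemma integral_thresholdAllocation_div (hρ : Measurable ρ)
    (hDR : Integrable (fun ξ => D / R ξ) ν) :
    ∫ ξ, thresholdAllocation ρ l α D ξ / R ξ ∂ν
      = ∫ ξ in ρ ⁻¹' Ioi l, D / R ξ ∂ν + α * ∫ ξ in ρ ⁻¹' {l}, D / R ξ ∂ν := by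
  have hA := hρ (measurableSet_Ioi (a := l))
  have hB := hρ (measurableSet_singleton l)
  have hpt : (fun ξ => thresholdAllocation ρ l α D ξ / R ξ) = fun ξ =>
      (ρ ⁻¹' Ioi l).indicator (fun ξ => D / R ξ) ξ
        + α * (ρ ⁻¹' {l}).indicator (fun ξ => D / R ξ) ξ := by
    funext ξ
    simp only [thresholdAllocation, Pi.add_apply, Set.indicator]
    split_ifs <;> ring
  rw [hpt, integral_add (hDR.indicator hA) ((hDR.indicator hB).const_mul α), integral_const_mul,
    integral_indicator hA, integral_indicator hB]

end thresholdAllocation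

theorem exists_threshold_allocation (hD : 0 ≤ D) (hR : ∀ᵐ ξ ∂ν, 0 < R ξ)
    (hRm : AEMeasurable R ν) (hSm : AEMeasurable S ν) (hDR : Integrable (fun ξ => D / R ξ) ν)
    {l f : ℝ} (hlo : (budgetDistribution ν D R S).real (Ioi l) ≤ f)
    (hhi : f ≤ (budgetDistribution ν D R S).real (Ici l)) :
    ∃ x : X → ℝ, Measurable x ∧ (∀ ξ, 0 ≤ x ξ ∧ x ξ ≤ D) ∧ ∫ ξ, x ξ / R ξ ∂ν = f ∧
      ∀ᵐ ξ ∂ν, (l < R ξ / S ξ → x ξ = D) ∧ (R ξ / S ξ < l → x ξ = 0) := by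
  have hρ : AEMeasurable (fun ξ => R ξ / S ξ) ν := hRm.div hSm
  -- a measurable version of `R / S` makes the allocation measurable
  set ρ := hρ.mk _
  have hm : ∀ A, MeasurableSet A →
      (budgetDistribution ν D R S).real A = ∫ ξ in ρ ⁻¹' A, D / R ξ ∂ν := fun A hA => by
    rw [budgetDistribution,
      Measure.map_congr ((withDensity_absolutelyContinuous _ _).ae_le hρ.ae_eq_mk)]
    exact measureReal_map_withDensity_ofReal (hR.mono fun ξ hξ => div_nonneg hD hξ.le) hDR.1
      hρ.measurable_mk.aemeasurable hA
  have := isFiniteMeasure_budgetDistribution (S := S) hDR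
  obtain ⟨α, hα, hαf⟩ := exists_mem_Icc_add_mul_eq measureReal_nonneg hlo
    (by rwa [← measureReal_union (by simp) (measurableSet_singleton l), Ioi_union_left])
  refine ⟨thresholdAllocation ρ l α D, measurable_thresholdAllocation hρ.measurable_mk,
    thresholdAllocation_mem_Icc hD hα, ?_, ?_⟩
  · rw [integral_thresholdAllocation_div hρ.measurable_mk hDR, ← hm _ measurableSet_Ioi,
      ← hm _ (measurableSet_singleton l), hαf]
  · filter_upwards [hρ.ae_eq_mk] with ξ hξ
    exact ⟨fun h => thresholdAllocation_eq_of_lt (h.trans_eq hξ),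
      fun h => thresholdAllocation_eq_zero_of_lt (hξ.symm.trans_lt h)⟩

noncomputable def cellValue (ν : Measure X) (D : ℝ) (R S : X → ℝ) (f : ℝ) : ℝ :=
  sInf {v : ℝ | ∃ x : X → ℝ, Measurable x ∧ (∀ ξ, 0 ≤ x ξ ∧ x ξ ≤ D) ∧
    (∫ ξ, x ξ / R ξ ∂ν) ≤ f ∧ v = ∫ ξ, (D - x ξ) / S ξ ∂ν}

lemma cellValue_le (hS : ∀ᵐ ξ ∂ν, 0 < S ξ) {f : ℝ} {x : X → ℝ} (hx : Measurable x)
    (hxD : ∀ ξ, 0 ≤ x ξ ∧ x ξ ≤ D) (hxf : ∫ ξ, x ξ / R ξ ∂ν ≤ f) :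
    cellValue ν D R S f ≤ ∫ ξ, (D - x ξ) / S ξ ∂ν := by
  refine csInf_le ⟨0, ?_⟩ ⟨x, hx, hxD, hxf, rfl⟩
  rintro _ ⟨y, -, hyD, -, rfl⟩
  refine integral_nonneg_of_ae ?_
  filter_upwards [hS] with ξ hξ using div_nonneg (sub_nonneg.2 (hyD ξ).2) hξ.le

lemma le_cellValue (hD : 0 ≤ D) {f c : ℝ} (hf : 0 ≤ f)
    (h : ∀ x : X → ℝ, Measurable x → (∀ ξ, 0 ≤ x ξ ∧ x ξ ≤ D) → ∫ ξ, x ξ / R ξ ∂ν ≤ f →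
      c ≤ ∫ ξ, (D - x ξ) / S ξ ∂ν) :
    c ≤ cellValue ν D R S f := by
  refine le_csInf ⟨_, 0, measurable_const, fun _ => ⟨le_rfl, hD⟩, by simpa using hf, rfl⟩ ?_
  rintro _ ⟨x, hx, hxD, hxf, rfl⟩
  exact h x hx hxD hxf

/-- Weak duality: threshold allocations minimise the Lagrangian `cost + l * budget`. -/
theorem integral_sub_div_add_mul_integral_div_le (hR : ∀ᵐ ξ ∂ν, 0 < R ξ)
    (hS : ∀ᵐ ξ ∂ν, 0 < S ξ) (hRm : AEMeasurable R ν) (hSm : AEMeasurable S ν)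
    (hDR : Integrable (fun ξ => D / R ξ) ν) (hDS : Integrable (fun ξ => D / S ξ) ν) {l : ℝ}
    {x y : X → ℝ} (hx : Measurable x) (hxD : ∀ ξ, 0 ≤ x ξ ∧ x ξ ≤ D) (hy : Measurable y)
    (hyD : ∀ ξ, 0 ≤ y ξ ∧ y ξ ≤ D)
    (hthr : ∀ᵐ ξ ∂ν, (l < R ξ / S ξ → x ξ = D) ∧ (R ξ / S ξ < l → x ξ = 0)) :
    ∫ ξ, (D - x ξ) / S ξ ∂ν + l * ∫ ξ, x ξ / R ξ ∂ν
      ≤ ∫ ξ, (D - y ξ) / S ξ ∂ν + l * ∫ ξ, y ξ / R ξ ∂ν := by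
  have hint : ∀ z : X → ℝ, Measurable z → (∀ ξ, 0 ≤ z ξ ∧ z ξ ≤ D) →
      Integrable (fun ξ => (D - z ξ) / S ξ) ν ∧ Integrable (fun ξ => l * (z ξ / R ξ)) ν :=
    fun z hz hzD => ⟨integrable_div_of_mem_Icc (y := fun ξ => D - z ξ) (measurable_const.sub hz)
      (fun ξ => ⟨sub_nonneg.2 (hzD ξ).2, sub_le_self _ (hzD ξ).1⟩) hS hSm hDS,
      (integrable_div_of_mem_Icc hz hzD hR hRm hDR).const_mul l⟩
  obtain ⟨hxS, hxR⟩ := hint x hx hxD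
  obtain ⟨hyS, hyR⟩ := hint y hy hyD
  rw [← integral_const_mul, ← integral_const_mul, ← integral_add hxS hxR, ← integral_add hyS hyR]
  refine integral_mono_ae (hxS.add hxR) (hyS.add hyR) ?_
  filter_upwards [hR, hS, hthr] with ξ hRξ hSξ hξ
  exact sub_div_add_mul_div_le_of_threshold hRξ hSξ (hyD ξ) hξ.1 hξ.2

theorem cellValue_add_mul_sub_le (hD : 0 ≤ D) (hR : ∀ᵐ ξ ∂ν, 0 < R ξ)
    (hS : ∀ᵐ ξ ∂ν, 0 < S ξ) (hRm : AEMeasurable R ν) (hSm : AEMeasurable S ν)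
    (hDR : Integrable (fun ξ => D / R ξ) ν) (hDS : Integrable (fun ξ => D / S ξ) ν)
    {l f g : ℝ} (hl : 0 ≤ l) (hg : 0 ≤ g) {x : X → ℝ} (hx : Measurable x)
    (hxD : ∀ ξ, 0 ≤ x ξ ∧ x ξ ≤ D) (hxf : ∫ ξ, x ξ / R ξ ∂ν = f)
    (hthr : ∀ᵐ ξ ∂ν, (l < R ξ / S ξ → x ξ = D) ∧ (R ξ / S ξ < l → x ξ = 0)) :
    cellValue ν D R S f + -l * (g - f) ≤ cellValue ν D R S g := by
  have hfx := cellValue_le hS hx hxD hxf.le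
  refine le_cellValue hD hg fun y hy hyD hyg => ?_
  have hlag := integral_sub_div_add_mul_integral_div_le hR hS hRm hSm hDR hDS hx hxD hy hyD hthr
  rw [hxf] at hlag
  nlinarith [mul_le_mul_of_nonneg_left hyg hl]

theorem cellValue_add_neg_survivalQuantile_mul_le [IsFiniteMeasure ν] (hD : 0 ≤ D)
    (hRm : AEMeasurable R ν) (hSm : AEMeasurable S ν) {Rmin Rmax Smin : ℝ} (hRmin : 0 < Rmin)
    (hSmin : 0 < Smin) (hR : ∀ᵐ ξ ∂ν, Rmin ≤ R ξ ∧ R ξ ≤ Rmax) (hS : ∀ᵐ ξ ∂ν, Smin ≤ S ξ)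
    {f g : ℝ} (hf0 : 0 ≤ f) (hf : f ≤ ∫ ξ, D / R ξ ∂ν) (hg : 0 ≤ g) :
    cellValue ν D R S f + -survivalQuantile (budgetDistribution ν D R S) f * (g - f)
      ≤ cellValue ν D R S g := by
  have hRpos : ∀ᵐ ξ ∂ν, 0 < R ξ := hR.mono fun ξ hξ => hRmin.trans_le hξ.1
  have hSpos : ∀ᵐ ξ ∂ν, 0 < S ξ := hS.mono fun ξ hξ => hSmin.trans_le hξ
  have hDR := integrable_const_div_of_le hD hRmin hRm (hR.mono fun ξ hξ => hξ.1)
  have hDS := integrable_const_div_of_le hD hSmin hSm hS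
  have hρ : AEMeasurable (fun ξ => R ξ / S ξ) ν := hRm.div hSm
  have := isFiniteMeasure_budgetDistribution (S := S) hDR
  have hm0 : budgetDistribution ν D R S (Iic 0) = 0 := by
    refine map_withDensity_eq_zero hρ measurableSet_Iic ?_
    filter_upwards [hRpos, hSpos] with ξ hRξ hSξ using not_le.2 (div_pos hRξ hSξ)
  have hmT : budgetDistribution ν D R S (Ioi (Rmax / Smin)) = 0 := by
    refine map_withDensity_eq_zero hρ measurableSet_Ioi ?_
    filter_upwards [hR, hS, hRpos] with ξ hRξ hSξ hRξ'
    exact not_lt.2 (div_le_div₀ (hRξ'.le.trans hRξ.2) hRξ.2 hSmin hSξ)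
  have htot : (budgetDistribution ν D R S).real univ = ∫ ξ, D / R ξ ∂ν := by
    rw [budgetDistribution_real_apply (hRpos.mono fun ξ hξ => div_nonneg hD hξ.le) hRm hSm
      MeasurableSet.univ, preimage_univ, Measure.restrict_univ]
  obtain ⟨hl, hlo, hhi⟩ := survivalQuantile_spec hm0 hmT hf0 (hf.trans_eq htot.symm)
  obtain ⟨x, hx, hxD, hxf, hthr⟩ := exists_threshold_allocation hD hRpos hRm hSm hDR hlo hhi
  exact cellValue_add_mul_sub_le hD hRpos hSpos hRm hSm hDR hDS hl hg hx hxD hxf hthr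

end MeasureTheory

theorem tau_one_sided_derivatives_general
    (C : Set (EuclideanSpace ℝ (Fin 2))) (hC : IsCompact C)
    (μ : Measure (EuclideanSpace ℝ (Fin 2))) [IsFiniteMeasure μ]
    (D : ℝ) (hD : 0 < D)
    (R S : EuclideanSpace ℝ (Fin 2) → ℝ)
    (hRcont : ContinuousOn R C) (hScont : ContinuousOn S C)
    (Rmin Rmax Smin Smax : ℝ) (hRmin : 0 < Rmin) (hSmin : 0 < Smin)
    (hR : ∀ ξ ∈ C, Rmin ≤ R ξ ∧ R ξ ≤ Rmax)
    (hS : ∀ ξ ∈ C, Smin ≤ S ξ ∧ S ξ ≤ Smax)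
    (fbar : ℝ) (hfbar : fbar = ∫ ξ in C, D / R ξ ∂μ)
    (τ : ℝ → ℝ)
    (hτ : ∀ f : ℝ, τ f = sInf {v : ℝ | ∃ x : EuclideanSpace ℝ (Fin 2) → ℝ,
        Measurable x ∧ (∀ ξ, 0 ≤ x ξ ∧ x ξ ≤ D) ∧
        (∫ ξ in C, x ξ / R ξ ∂μ) ≤ f ∧
        v = ∫ ξ in C, (D - x ξ) / S ξ ∂μ})
    (ρf : ℝ → ℝ)
    (hρf : ∀ f : ℝ, ρf f =
      sSup {x : ℝ | f < ∫ ξ in {ξ ∈ C | x < R ξ / S ξ}, D / R ξ ∂μ}) :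
    ∀ f ∈ Icc (0:ℝ) fbar,
      (∀ g, 0 ≤ g → g < f → (τ f - τ g) / (f - g) ≤ - ρf f) ∧
      (∀ g, f < g → g ≤ fbar → - ρf f ≤ (τ g - τ f) / (g - f)) := by
  intro f hf
  have hCm : MeasurableSet C := hC.isClosed.measurableSet
  have hRm := hRcont.aemeasurable (μ := μ) hCm
  have hSm := hScont.aemeasurable (μ := μ) hCm
  have hmass : ∀ t, ∫ ξ in {ξ ∈ C | t < R ξ / S ξ}, D / R ξ ∂μ
      = (budgetDistribution (μ.restrict C) D R S).real (Ioi t) := fun t => by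
    rw [budgetDistribution_real_apply (ae_restrict_of_forall_mem hCm fun ξ hξ =>
      div_nonneg hD.le (hRmin.trans_le (hR ξ hξ).1).le) hRm hSm measurableSet_Ioi,
      Measure.restrict_restrict' hCm, inter_comm]
    rfl
  have hsupp := fun g => cellValue_add_neg_survivalQuantile_mul_le hD.le hRm hSm hRmin hSmin
    (ae_restrict_of_forall_mem hCm hR) (ae_restrict_of_forall_mem hCm fun ξ hξ => (hS ξ hξ).1)
    hf.1 (hfbar ▸ hf.2) (g := g)
  rw [show τ = cellValue (μ.restrict C) D R S from funext hτ, hρf]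
  simp only [hmass]
  have := slope_le_and_le_slope_of_supporting_line hf.1 hsupp
  exact ⟨this.1, fun g hfg _ => this.2 g hfg⟩

/-- the one-sided derivatives of the single-cell subproblem value `τ_ℓ`
satisfy `(τ_ℓ)'_−(f) ≤ −ρ_ℓ(f)` and `(τ_ℓ)'_+(f) ≥ −ρ_ℓ(f)` (expressed via the
corresponding bounds on the left/right difference quotients of the convex
function `τ_ℓ`). -/
theorem tau_one_sided_derivatives
    (C : Set (EuclideanSpace ℝ (Fin 2))) (hC : IsCompact C)
    (μ : Measure (EuclideanSpace ℝ (Fin 2))) [IsFiniteMeasure μ]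
    (D : ℝ) (hD : 0 < D)
    (R S : EuclideanSpace ℝ (Fin 2) → ℝ)
    (hRcont : ContinuousOn R C) (hScont : ContinuousOn S C)
    (Rmin Rmax Smin Smax : ℝ) (hRmin : 0 < Rmin) (hSmin : 0 < Smin)
    (hR : ∀ ξ ∈ C, Rmin ≤ R ξ ∧ R ξ ≤ Rmax)
    (hS : ∀ ξ ∈ C, Smin ≤ S ξ ∧ S ξ ≤ Smax)
    (ρmin ρmax : ℝ) (hρmin : 0 < ρmin)
    (hρrange : ∀ ξ ∈ C, R ξ / S ξ ∈ Icc ρmin ρmax)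
    -- the induced rate-ratio distribution has a continuous density,
    -- positive at the endpoints of its support
    (h : ℝ → ℝ) (hcont : Continuous h)
    (hdens : ∀ x y : ℝ, ρmin ≤ x → x ≤ y → y ≤ ρmax →
      (((μ.restrict C).map (fun ξ => R ξ / S ξ)) (Ioc x y)).toReal
        = (μ C).toReal * ∫ t in x..y, h t)
    (hposlo : 0 < h ρmin) (hposhi : 0 < h ρmax)
    (fbar : ℝ) (hfbar : fbar = ∫ ξ in C, D / R ξ ∂μ)
    (τ : ℝ → ℝ)
    (hτ : ∀ f : ℝ, τ f = sInf {v : ℝ | ∃ x : EuclideanSpace ℝ (Fin 2) → ℝ,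
        Measurable x ∧ (∀ ξ, 0 ≤ x ξ ∧ x ξ ≤ D) ∧
        (∫ ξ in C, x ξ / R ξ ∂μ) ≤ f ∧
        v = ∫ ξ in C, (D - x ξ) / S ξ ∂μ})
    (ρf : ℝ → ℝ)
    (hρf : ∀ f : ℝ, ρf f =
      sSup {x : ℝ | f < ∫ ξ in {ξ ∈ C | x < R ξ / S ξ}, D / R ξ ∂μ}) :
    ∀ f ∈ Icc (0:ℝ) fbar,
      (∀ g, 0 ≤ g → g < f → (τ f - τ g) / (f - g) ≤ - ρf f) ∧
      (∀ g, f < g → g ≤ fbar → - ρf f ≤ (τ g - τ f) / (g - f)) :=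
  tau_one_sided_derivatives_general C hC μ D hD R S hRcont hScont Rmin Rmax Smin Smax hRmin hSmin hR
    hS fbar hfbar τ hτ ρf hρf
end

section
/- Consider the finite LP: minimize f + Σ_ℓ Σ_{n∈C_ℓ} y_{ℓ,n}/S_{ℓ,n} subject to Σ_{n∈C_ℓ} x_{ℓ,n}/R_{ℓ,n} ≤ f for all ℓ, x_{ℓ,n} + y_{ℓ,n} ≥ D_n, and f, x_{ℓ,n}, y_{ℓ,n} ≥ 0. There exist thresholds ρ_ℓ > 0 such that in some optimal solution, x_{ℓ,n} = D_n whenever R_{ℓ,n}/S_{ℓ,n} > ρ_ℓ and y_{ℓ,n} = D_n whenever R_{ℓ,n}/S_{ℓ,n} < ρ_ℓ; both x_{ℓ,n} and y_{ℓ,n} can be positive only if R_{ℓ,n}/S_{ℓ,n} = ρ_ℓ. -/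
/-!
Eliminating `y = D - x` and capping `f` by the cost of serving everyone by the macro cell turns
the LP into the minimisation of a continuous function over a compact set; a minimiser exists and
is optimal for the original LP. At a minimiser no pico time can be moved profitably inside a
cell: moving `ε` units of pico time from user `m` to user `n` changes the cost by
`ε (R m / S m - R n / S n)`. Hence an unsaturated user (`x n < D n`) never has a larger rate ratio
than a user of the same cell with pico service (`0 < x m`), and the largest ratio of an
unsaturated user of the cell (or any positive lower bound of its ratios, if there is none) is a
threshold.
-/

open Finset

theorem sum_add_single_sub_single_div {ι : Type*} [DecidableEq ι] (s : Finset ι) (x c : ι → ℝ)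
    (n m : ι) (u v : ℝ) :
    ∑ k ∈ s, (x + Pi.single n u - Pi.single m v : ι → ℝ) k / c k =
      ∑ k ∈ s, x k / c k + (if n ∈ s then u / c n else 0) - (if m ∈ s then v / c m else 0) := by
  simp [add_div, sub_div, sum_add_distrib, sum_sub_distrib, Pi.single_apply, ite_div]

theorem exists_pos_threshold {α : Type*} (s : Finset α) (r : α → ℝ) (hr : ∀ n ∈ s, 0 < r n)
    (P Q : α → Prop) (hPQ : ∀ n ∈ s, ∀ m ∈ s, P n → Q m → r n ≤ r m) :
    ∃ ρ > 0, ∀ n ∈ s, (ρ < r n → ¬P n) ∧ (r n < ρ → ¬Q n) ∧ (P n → Q n → r n = ρ) := by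
  classical
  by_cases hP : (s.filter P).Nonempty
  · obtain ⟨k, hk, hmax⟩ := (s.filter P).exists_max_image r hP
    rw [mem_filter] at hk
    refine ⟨r k, hr k hk.1, fun n hn => ⟨fun hlt hPn => ?_, fun hlt hQn => ?_, fun hPn hQn => ?_⟩⟩
    · exact (hmax n (mem_filter.2 ⟨hn, hPn⟩)).not_gt hlt
    · exact (hPQ k hk.1 n hn hk.2 hQn).not_gt hlt
    · exact (hmax n (mem_filter.2 ⟨hn, hPn⟩)).antisymm (hPQ k hk.1 n hn hk.2 hQn)
  · have hP' : ∀ n ∈ s, ¬P n := fun n hn hPn => hP ⟨n, mem_filter.2 ⟨hn, hPn⟩⟩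
    obtain ⟨ρ, hρ, hρle⟩ : ∃ ρ > 0, ∀ n ∈ s, ρ ≤ r n := by
      rcases s.eq_empty_or_nonempty with rfl | hs
      · exact ⟨1, one_pos, by simp⟩
      · obtain ⟨k, hk, hmin⟩ := s.exists_min_image r hs
        exact ⟨r k, hr k hk, hmin⟩
    exact ⟨ρ, hρ, fun n hn => ⟨fun _ => hP' n hn, fun hlt _ => (hρle n hn).not_gt hlt,
      fun hPn => absurd hPn (hP' n hn)⟩⟩

noncomputable section

namespace PicoMacroLP

variable {ι κ : Type*} [Fintype ι] [DecidableEq κ]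

def picoTime (cell : ι → κ) (R x : ι → ℝ) (ℓ : κ) : ℝ :=
  ∑ n ∈ univ.filter (fun n => cell n = ℓ), x n / R n

def cost (S : ι → ℝ) (f : ℝ) (y : ι → ℝ) : ℝ :=
  f + ∑ n, y n / S n

def Feasible (cell : ι → κ) (R D : ι → ℝ) (f : ℝ) (x y : ι → ℝ) : Prop :=
  0 ≤ f ∧ (∀ n, 0 ≤ x n) ∧ (∀ n, 0 ≤ y n) ∧ (∀ n, D n ≤ x n + y n) ∧
    ∀ ℓ, picoTime cell R x ℓ ≤ f

/-- Pico schedules `(f, x)` with `x ≤ D` and `f ≤ B`, the macro schedule being `y = D - x`. -/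
def region (cell : ι → κ) (R D : ι → ℝ) (B : ℝ) : Set (ℝ × (ι → ℝ)) :=
  Set.Icc 0 (B, D) ∩ {p | ∀ ℓ, picoTime cell R p.2 ℓ ≤ p.1}

theorem mem_region {cell : ι → κ} {R D : ι → ℝ} {B : ℝ} {p : ℝ × (ι → ℝ)} :
    p ∈ region cell R D B ↔
      0 ≤ p.1 ∧ p.1 ≤ B ∧ (∀ n, 0 ≤ p.2 n ∧ p.2 n ≤ D n) ∧ ∀ ℓ, picoTime cell R p.2 ℓ ≤ p.1 := by
  simp only [region, Set.mem_inter_iff, Set.mem_Icc, Prod.le_def, Pi.le_def, Set.mem_ofPred_eq,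
    Prod.fst_zero, Prod.snd_zero, Pi.zero_apply, forall_and]
  tauto

theorem continuous_picoTime (cell : ι → κ) (R : ι → ℝ) (ℓ : κ) :
    Continuous fun x => picoTime cell R x ℓ :=
  continuous_finsetSum _ fun n _ => (continuous_apply n).div_const _

theorem isCompact_region (cell : ι → κ) (R D : ι → ℝ) (B : ℝ) :
    IsCompact (region cell R D B) := by
  refine isCompact_Icc.inter_right ?_
  simp only [Set.ofPred_forall]
  exact isClosed_iInter fun ℓ =>
    isClosed_le ((continuous_picoTime cell R ℓ).comp continuous_snd) continuous_fst

theorem continuous_cost_sub (S D : ι → ℝ) :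
    Continuous fun p : ℝ × (ι → ℝ) => cost S p.1 (D - p.2) := by
  unfold cost
  fun_prop

theorem exists_isMinOn_region (cell : ι → κ) (R S : ι → ℝ) {D : ι → ℝ} {B : ℝ} (hB : 0 ≤ B)
    (hD : 0 ≤ D) :
    ∃ p ∈ region cell R D B, IsMinOn (fun p => cost S p.1 (D - p.2)) (region cell R D B) p :=
  (isCompact_region cell R D B).exists_isMinOn
    ⟨0, mem_region.2 ⟨le_rfl, hB, fun n => ⟨le_rfl, hD n⟩, fun ℓ => by simp [picoTime]⟩⟩
    (continuous_cost_sub S D).continuousOn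

theorem picoTime_mono {cell : ι → κ} {R x x' : ι → ℝ} (hR : ∀ n, 0 < R n) (hx : x ≤ x') (ℓ : κ) :
    picoTime cell R x ℓ ≤ picoTime cell R x' ℓ :=
  sum_le_sum fun n _ => div_le_div_of_nonneg_right (hx n) (hR n).le

theorem cost_mono {S : ι → ℝ} (hS : ∀ n, 0 < S n) (f : ℝ) {y y' : ι → ℝ} (hy : y ≤ y') :
    cost S f y ≤ cost S f y' :=
  add_le_add_right (sum_le_sum fun n _ => div_le_div_of_nonneg_right (hy n) (hS n).le) f

theorem le_cost {S : ι → ℝ} (hS : ∀ n, 0 < S n) (f : ℝ) {y : ι → ℝ} (hy : 0 ≤ y) :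
    f ≤ cost S f y := by
  simpa [cost] using cost_mono hS f hy

theorem cost_le_of_isMinOn {cell : ι → κ} {R S D : ι → ℝ} (hR : ∀ n, 0 < R n) (hS : ∀ n, 0 < S n)
    (hD : 0 ≤ D) {p : ℝ × (ι → ℝ)}
    (hp : IsMinOn (fun p => cost S p.1 (D - p.2)) (region cell R D (cost S 0 D)) p)
    {f : ℝ} {x y : ι → ℝ} (hfeas : Feasible cell R D f x y) :
    cost S p.1 (D - p.2) ≤ cost S f y := by
  obtain ⟨hf, hx, hy, hxy, hload⟩ := hfeas
  by_cases hfB : f ≤ cost S 0 D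
  · have hmem : (f, x ⊓ D) ∈ region cell R D (cost S 0 D) :=
      mem_region.2 ⟨hf, hfB, fun n => ⟨le_min (hx n) (hD n), min_le_right _ _⟩,
        fun ℓ => (picoTime_mono hR inf_le_left ℓ).trans (hload ℓ)⟩
    calc cost S p.1 (D - p.2) ≤ cost S f (D - x ⊓ D) := hp hmem
      _ ≤ cost S f y := cost_mono hS f fun n => by
          rw [Pi.sub_apply, Pi.inf_apply, sub_le_iff_le_add', ← min_add_add_right]
          exact le_min (by linarith [hxy n]) (by linarith [hy n])
  · have hmem : (0, 0) ∈ region cell R D (cost S 0 D) :=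
      mem_region.2 ⟨le_rfl, le_cost hS 0 hD, fun n => ⟨le_rfl, hD n⟩, fun ℓ => by simp [picoTime]⟩
    calc cost S p.1 (D - p.2) ≤ cost S 0 D := by simpa using hp hmem
      _ ≤ f := (not_le.1 hfB).le
      _ ≤ cost S f y := le_cost hS f hy

theorem div_le_div_of_isMinOn {cell : ι → κ} {R S D : ι → ℝ} (hR : ∀ n, 0 < R n) {B : ℝ}
    {p : ℝ × (ι → ℝ)} (hpK : p ∈ region cell R D B)
    (hp : IsMinOn (fun p => cost S p.1 (D - p.2)) (region cell R D B) p)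
    {n m : ι} (hcell : cell n = cell m) (hn : p.2 n < D n) (hm : 0 < p.2 m) :
    R n / S n ≤ R m / S m := by
  classical
  by_contra! hlt
  have hnm : n ≠ m := by rintro rfl; exact lt_irrefl _ hlt
  obtain ⟨f, x⟩ := p
  obtain ⟨hf, hfB, hx, hload⟩ := mem_region.1 hpK
  set ε := min ((D n - x n) / R n) (x m / R m)
  have hε : 0 < ε := lt_min (div_pos (sub_pos.2 hn) (hR n)) (div_pos hm (hR m))
  have hεn : ε * R n ≤ D n - x n := (le_div_iff₀ (hR n)).1 (min_le_left _ _)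
  have hεm : ε * R m ≤ x m := (le_div_iff₀ (hR m)).1 (min_le_right _ _)
  set x' : ι → ℝ := x + Pi.single n (ε * R n) - Pi.single m (ε * R m)
  have hx' : ∀ k, 0 ≤ x' k ∧ x' k ≤ D k := by
    intro k
    by_cases hkn : k = n
    · subst hkn
      simp only [x', Pi.sub_apply, Pi.add_apply, Pi.single_eq_same, Pi.single_eq_of_ne hnm,
        sub_zero]
      constructor <;> nlinarith [hx k, hR k]
    by_cases hkm : k = m
    · subst hkm
      simp only [x', Pi.sub_apply, Pi.add_apply, Pi.single_eq_same, Pi.single_eq_of_ne hkn,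
        add_zero]
      constructor <;> nlinarith [hx k, hR k]
    simpa [x', Pi.single_eq_of_ne hkn, Pi.single_eq_of_ne hkm] using hx k
  have hload' : ∀ ℓ, picoTime cell R x' ℓ = picoTime cell R x ℓ := by
    intro ℓ
    simp only [picoTime, x', sum_add_single_sub_single_div, mem_filter, mem_univ, true_and, hcell,
      mul_div_cancel_right₀ _ (hR n).ne', mul_div_cancel_right₀ _ (hR m).ne']
    ring
  have hcost : cost S f (D - x') = cost S f (D - x) - ε * (R n / S n - R m / S m) := by
    have hD' : D - x' = D - x + Pi.single m (ε * R m) - Pi.single n (ε * R n) := by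
      simp only [x']; abel
    simp only [cost, hD', sum_add_single_sub_single_div, mem_univ, if_true]
    ring
  have hmem : (f, x') ∈ region cell R D B :=
    mem_region.2 ⟨hf, hfB, hx', fun ℓ => (hload' ℓ).trans_le (hload ℓ)⟩
  have hle : cost S f (D - x) ≤ cost S f (D - x') := hp hmem
  nlinarith [mul_pos hε (sub_pos.2 hlt)]

end PicoMacroLP

end

open PicoMacroLP

/-- the finite LP (minimize `f + Σ y_n/S_n` over `f, x, y ≥ 0` with
`Σ_{n∈C_ℓ} x_n/R_n ≤ f` and `x_n + y_n ≥ D_n`) has an optimal solution of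
rate-ratio threshold form: there are thresholds `ρ_ℓ > 0` such that `x_n = D_n`
when `R_n/S_n > ρ_ℓ`, `y_n = D_n` when `R_n/S_n < ρ_ℓ`, and `x_n, y_n` can both be
positive only when `R_n/S_n = ρ_ℓ`. -/
theorem finiteLP_rate_ratio_structure
    (Nu L : ℕ) (cell : Fin Nu → Fin L)
    (R S Dd : Fin Nu → ℝ)
    (hR : ∀ n, 0 < R n) (hS : ∀ n, 0 < S n) (hD : ∀ n, 0 < Dd n) :
    ∃ ρ : Fin L → ℝ, (∀ ℓ, 0 < ρ ℓ) ∧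
    ∃ (f : ℝ) (x y : Fin Nu → ℝ),
      -- feasibility
      0 ≤ f ∧ (∀ n, 0 ≤ x n) ∧ (∀ n, 0 ≤ y n) ∧
      (∀ n, Dd n ≤ x n + y n) ∧
      (∀ ℓ : Fin L, ∑ n ∈ univ.filter (fun n => cell n = ℓ), x n / R n ≤ f) ∧
      -- optimality
      (∀ (f' : ℝ) (x' y' : Fin Nu → ℝ),
        0 ≤ f' → (∀ n, 0 ≤ x' n) → (∀ n, 0 ≤ y' n) →
        (∀ n, Dd n ≤ x' n + y' n) →
        (∀ ℓ : Fin L, ∑ n ∈ univ.filter (fun n => cell n = ℓ), x' n / R n ≤ f') →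
        f + ∑ n, y n / S n ≤ f' + ∑ n, y' n / S n) ∧
      -- threshold structure
      (∀ n, ρ (cell n) < R n / S n → x n = Dd n) ∧
      (∀ n, R n / S n < ρ (cell n) → y n = Dd n) ∧
      (∀ n, 0 < x n → 0 < y n → R n / S n = ρ (cell n)) := by
  have hD0 : 0 ≤ Dd := fun n => (hD n).le
  obtain ⟨⟨f, x⟩, hpK, hpmin⟩ :=
    exists_isMinOn_region cell R S (le_cost hS 0 hD0) hD0
  obtain ⟨hf, -, hx, hload⟩ := mem_region.1 hpK
  choose ρ hρpos hρ using fun ℓ =>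
    exists_pos_threshold (univ.filter fun n => cell n = ℓ) (fun n => R n / S n)
      (fun n _ => div_pos (hR n) (hS n)) (fun n => x n < Dd n) (fun n => 0 < x n)
      fun n hn m hm => div_le_div_of_isMinOn hR hpK hpmin
        ((mem_filter.1 hn).2.trans (mem_filter.1 hm).2.symm)
  have hρcell := fun n => hρ (cell n) n (mem_filter.2 ⟨mem_univ n, rfl⟩)
  refine ⟨ρ, hρpos, f, x, Dd - x, hf, fun n => (hx n).1, fun n => sub_nonneg.2 (hx n).2,
    fun n => by simp, hload, fun f' x' y' hf' hx' hy' hxy' hload' =>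
      cost_le_of_isMinOn hR hS hD0 hpmin ⟨hf', hx', hy', hxy', hload'⟩, fun n hlt => ?_,
    fun n hlt => ?_, fun n hxn hyn => (hρcell n).2.2 (sub_pos.1 hyn) hxn⟩
  · exact (hx n).2.antisymm (not_lt.1 ((hρcell n).1 hlt))
  · simp [(not_lt.1 ((hρcell n).2.1 hlt)).antisymm (hx n).1]
end

section
/- In the on-off continuous LP with interference (rates satisfy R^{σ'}_ℓ(ξ) > R^σ_ℓ(ξ) pointwise whenever σ' ⊂ σ and ℓ ∈ σ'), at any optimal solution, for every on-state σ with f^σ > 0 and every ℓ ∈ σ, the time constraint ∫ x^σ_ℓ(ξ)/R^σ_ℓ(ξ) λ(dξ) ≤ f^σ holds with equality. -/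
open MeasureTheory Set Finset
open scoped Classical

/-- in the on-off continuous LP with interference (rates strictly
improve when strictly fewer picos are on), at any optimal solution every time
constraint corresponding to an active state (`f^σ > 0`) holds with equality:
`∫ x^σ_ℓ/R^σ_ℓ dλ = f^σ` for all `ℓ ∈ σ`. -/
theorem onoffLP_constraints_tight_at_optimum
    (L : ℕ) (hL : 0 < L)
    (C0 : Set (EuclideanSpace ℝ (Fin 2))) (Cp : Fin L → Set (EuclideanSpace ℝ (Fin 2)))
    (hC0 : IsCompact C0) (hCp : ∀ ℓ, IsCompact (Cp ℓ))
    (μ : Measure (EuclideanSpace ℝ (Fin 2))) [IsFiniteMeasure μ]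
    (D : ℝ) (hD : 0 < D)
    (Smac : EuclideanSpace ℝ (Fin 2) → ℝ)
    (R : Finset (Fin L) → Fin L → EuclideanSpace ℝ (Fin 2) → ℝ)
    (hSmacc : Continuous Smac) (hRc : ∀ σ ℓ, Continuous (R σ ℓ))
    (Rlow Rhigh : ℝ) (hRlow : 0 < Rlow)
    (hSmacb : ∀ x, Rlow ≤ Smac x ∧ Smac x ≤ Rhigh)
    (hRb : ∀ σ ℓ x, Rlow ≤ R σ ℓ x ∧ R σ ℓ x ≤ Rhigh)
    -- interference monotonicity: strictly fewer active picos ⇒ strictly higher rates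
    (hmono : ∀ σ' σ : Finset (Fin L), σ' ⊆ σ → σ' ≠ σ → ∀ ℓ ∈ σ', ∀ ξ ∈ Cp ℓ,
      R σ ℓ ξ < R σ' ℓ ξ)
    -- on-states: the nonempty subsets of picos
    (States : Finset (Finset (Fin L)))
    (hStates : States = Finset.univ.filter (fun σ : Finset (Fin L) => σ.Nonempty))
    -- an optimal solution (f, x) of the on-off LP
    (f : Finset (Fin L) → ℝ)
    (x : Finset (Fin L) → Fin L → EuclideanSpace ℝ (Fin 2) → ℝ)
    (hffeas : ∀ σ ∈ States, 0 ≤ f σ)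
    (hxmeas : ∀ σ ℓ, Measurable (x σ ℓ)) (hxpos : ∀ σ ℓ ξ, 0 ≤ x σ ℓ ξ)
    (hxsupp : ∀ σ ℓ, σ ∉ States ∨ ℓ ∉ σ → x σ ℓ = 0)
    (hxD : ∀ ℓ ξ, ∑ σ ∈ States.filter (fun σ => ℓ ∈ σ), x σ ℓ ξ ≤ D)
    (hxf : ∀ σ ∈ States, ∀ ℓ ∈ σ, (∫ ξ in Cp ℓ, x σ ℓ ξ / R σ ℓ ξ ∂μ) ≤ f σ)
    (hopt : ∀ (f' : Finset (Fin L) → ℝ)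
        (x' : Finset (Fin L) → Fin L → EuclideanSpace ℝ (Fin 2) → ℝ),
      (∀ σ ∈ States, 0 ≤ f' σ) →
      (∀ σ ℓ, Measurable (x' σ ℓ)) → (∀ σ ℓ ξ, 0 ≤ x' σ ℓ ξ) →
      (∀ σ ℓ, σ ∉ States ∨ ℓ ∉ σ → x' σ ℓ = 0) →
      (∀ ℓ ξ, ∑ σ ∈ States.filter (fun σ => ℓ ∈ σ), x' σ ℓ ξ ≤ D) →
      (∀ σ ∈ States, ∀ ℓ ∈ σ, (∫ ξ in Cp ℓ, x' σ ℓ ξ / R σ ℓ ξ ∂μ) ≤ f' σ) →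
      (∑ σ ∈ States, f σ) + (∫ ξ in C0, D / Smac ξ ∂μ)
        + ∑ ℓ, ∫ ξ in Cp ℓ,
            (D - ∑ σ ∈ States.filter (fun σ => ℓ ∈ σ), x σ ℓ ξ) / Smac ξ ∂μ ≤
      (∑ σ ∈ States, f' σ) + (∫ ξ in C0, D / Smac ξ ∂μ)
        + ∑ ℓ, ∫ ξ in Cp ℓ,
            (D - ∑ σ ∈ States.filter (fun σ => ℓ ∈ σ), x' σ ℓ ξ) / Smac ξ ∂μ) :
    ∀ σ ∈ States, 0 < f σ → ∀ ℓ ∈ σ,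
      (∫ ξ in Cp ℓ, x σ ℓ ξ / R σ ℓ ξ ∂μ) = f σ := by
  intro σ hσ hfσ ℓ hℓ
  by_contra hne
  set A := ∫ ξ in Cp ℓ, x σ ℓ ξ / R σ ℓ ξ ∂μ with hAdef
  have hA : A < f σ := lt_of_le_of_ne (hxf σ hσ ℓ hℓ) hne
  have hCpm : ∀ k, MeasurableSet (Cp k) := fun k => (hCp k).measurableSet
  have hStmem : ∀ τ : Finset (Fin L), τ ∈ States ↔ τ.Nonempty := by
    intro τ; rw [hStates]; simp
  -- boundedness of x and integrability
  have hxle : ∀ τ k ξ, x τ k ξ ≤ D := by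
    intro τ k ξ
    by_cases h : τ ∈ States ∧ k ∈ τ
    · calc x τ k ξ ≤ ∑ ν ∈ States.filter (fun ν => k ∈ ν), x ν k ξ :=
          Finset.single_le_sum (fun ν _ => hxpos ν k ξ)
            (Finset.mem_filter.2 ⟨h.1, h.2⟩)
      _ ≤ D := hxD k ξ
    · rw [not_and_or] at h
      have h0 : x τ k ξ = 0 := by rw [hxsupp τ k h]; rfl
      rw [h0]; exact hD.le
  have hintOn : ∀ (τ ν : Finset (Fin L)) (k : Fin L),
      IntegrableOn (fun ξ => x τ k ξ / R ν k ξ) (Cp k) μ := by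
    intro τ ν k
    have hm : Measurable fun ξ => x τ k ξ / R ν k ξ :=
      (hxmeas τ k).div (hRc ν k).measurable
    refine Integrable.mono' (integrable_const (D / Rlow)) hm.aestronglyMeasurable ?_
    filter_upwards with ξ
    have h1 : 0 ≤ x τ k ξ / R ν k ξ :=
      div_nonneg (hxpos _ _ _) (hRlow.le.trans (hRb ν k ξ).1)
    rw [Real.norm_eq_abs, abs_of_nonneg h1]
    exact div_le_div₀ hD.le (hxle τ k ξ) hRlow (hRb ν k ξ).1
  have hA0 : 0 ≤ A :=
    setIntegral_nonneg (hCpm ℓ)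
      (fun ξ _ => div_nonneg (hxpos _ _ _) (hRlow.le.trans (hRb σ ℓ ξ).1))
  -- the time fraction to move
  set t := (f σ - A) / f σ with htdef
  have ht0 : 0 < t := div_pos (sub_pos.2 hA) hfσ
  have ht1 : t ≤ 1 := by rw [htdef, div_le_one hfσ]; linarith
  have htfσ : t * f σ = f σ - A := div_mul_cancel₀ _ (ne_of_gt hfσ)
  have htA : (1 - t) * f σ = A := by rw [sub_mul, one_mul, htfσ]; ring
  -- the smaller state
  set σ' := σ.erase ℓ with hσ'def
  have hσ'sub : σ' ⊆ σ := Finset.erase_subset ℓ σ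
  have hσ'ne : σ' ≠ σ := by
    intro h; rw [← h] at hℓ; exact Finset.notMem_erase ℓ σ hℓ
  have hσσ' : σ ≠ σ' := fun h => hσ'ne h.symm
  have hℓσ' : ℓ ∉ σ' := Finset.notMem_erase ℓ σ
  -- strictness: moved time is strictly cheaper
  have hptle : ∀ k ∈ σ', ∀ ξ ∈ Cp k, x σ k ξ / R σ' k ξ ≤ x σ k ξ / R σ k ξ := by
    intro k hk ξ hξ
    have hR : R σ k ξ < R σ' k ξ := hmono σ' σ hσ'sub hσ'ne k hk ξ hξ
    have hRpos : 0 < R σ k ξ := hRlow.trans_le (hRb σ k ξ).1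
    gcongr
    exact hxpos σ k ξ
  have hglt : ∀ k ∈ σ', (∫ ξ in Cp k, x σ k ξ / R σ' k ξ ∂μ) < f σ := by
    intro k hk
    have hkσ : k ∈ σ := hσ'sub hk
    have hale : (∫ ξ in Cp k, x σ k ξ / R σ k ξ ∂μ) ≤ f σ := hxf σ hσ k hkσ
    have hgle : (∫ ξ in Cp k, x σ k ξ / R σ' k ξ ∂μ)
        ≤ ∫ ξ in Cp k, x σ k ξ / R σ k ξ ∂μ :=
      setIntegral_mono_on (hintOn σ σ' k) (hintOn σ σ k) (hCpm k) (hptle k hk)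
    rcases eq_or_lt_of_le hale with heq | hlt
    swap
    · exact hgle.trans_lt hlt
    refine lt_of_le_of_ne (hgle.trans hale) fun hgeq => ?_
    have h2 : (∫ ξ in Cp k, x σ k ξ / R σ' k ξ ∂μ)
        = ∫ ξ in Cp k, x σ k ξ / R σ k ξ ∂μ := le_antisymm hgle (by rw [hgeq, heq])
    have hzero : (∫ ξ in Cp k, (x σ k ξ / R σ k ξ - x σ k ξ / R σ' k ξ) ∂μ) = 0 := by
      rw [integral_sub (hintOn σ σ k) (hintOn σ σ' k), h2, sub_self]
    have hnn : 0 ≤ᵐ[μ.restrict (Cp k)]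
        fun ξ => x σ k ξ / R σ k ξ - x σ k ξ / R σ' k ξ := by
      filter_upwards [ae_restrict_mem (hCpm k)] with ξ hξ
      exact sub_nonneg.2 (hptle k hk ξ hξ)
    have hae := (integral_eq_zero_iff_of_nonneg_ae hnn
      ((hintOn σ σ k).sub (hintOn σ σ' k))).1 hzero
    have hxz : (fun ξ => x σ k ξ / R σ k ξ) =ᵐ[μ.restrict (Cp k)] 0 := by
      filter_upwards [hae, ae_restrict_mem (hCpm k)] with ξ h0 hξ
      have hR : R σ k ξ < R σ' k ξ := hmono σ' σ hσ'sub hσ'ne k hk ξ hξ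
      have hRpos : 0 < R σ k ξ := hRlow.trans_le (hRb σ k ξ).1
      simp only [Pi.zero_apply] at h0 ⊢
      rcases (hxpos σ k ξ).lt_or_eq with hx | hx
      · exfalso
        have hlt2 : x σ k ξ / R σ' k ξ < x σ k ξ / R σ k ξ :=
          div_lt_div_of_pos_left hx hRpos hR
        linarith
      · rw [← hx, zero_div]
    have hI0 : (∫ ξ in Cp k, x σ k ξ / R σ k ξ ∂μ) = 0 := by
      rw [integral_congr_ae hxz]; simp
    rw [hI0] at heq; linarith
  -- the exchange bound B
  set B := if h : σ'.Nonempty then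
      σ'.sup' h (fun k => ∫ ξ in Cp k, x σ k ξ / R σ' k ξ ∂μ) else 0 with hBdef
  have hgnn : ∀ k, 0 ≤ ∫ ξ in Cp k, x σ k ξ / R σ' k ξ ∂μ := fun k =>
    setIntegral_nonneg (hCpm k)
      (fun ξ _ => div_nonneg (hxpos _ _ _) (hRlow.le.trans (hRb σ' k ξ).1))
  have hB0 : 0 ≤ B := by
    rw [hBdef]
    split
    · next h =>
        exact le_trans (hgnn h.choose)
          (Finset.le_sup' (f := fun k => ∫ ξ in Cp k, x σ k ξ / R σ' k ξ ∂μ) h.choose_spec)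
    · exact le_refl 0
  have hBg : ∀ k ∈ σ', (∫ ξ in Cp k, x σ k ξ / R σ' k ξ ∂μ) ≤ B := by
    intro k hk
    rw [hBdef, dif_pos ⟨k, hk⟩]
    exact Finset.le_sup' (f := fun k => ∫ ξ in Cp k, x σ k ξ / R σ' k ξ ∂μ) hk
  have hBlt : σ'.Nonempty → B < f σ := by
    intro hne'
    rw [hBdef, dif_pos hne']
    exact (Finset.sup'_lt_iff hne').2 hglt
  -- the modified solution
  set f' : Finset (Fin L) → ℝ :=
    fun τ => if τ = σ then A else if τ = σ' then f σ' + t * B else f τ with hf'def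
  set x' : Finset (Fin L) → Fin L → EuclideanSpace ℝ (Fin 2) → ℝ := fun τ k ξ =>
    if τ = σ then (if k ∈ σ' then (1 - t) * x σ k ξ else x σ k ξ)
    else if τ = σ' then (if k ∈ σ' then x σ' k ξ + t * x σ k ξ else x σ' k ξ)
    else x τ k ξ with hx'def
  -- feasibility of (f', x')
  have hf'pos : ∀ τ ∈ States, 0 ≤ f' τ := by
    intro τ hτ
    by_cases h1 : τ = σ
    · have : f' τ = A := by simp [hf'def, h1]
      rw [this]; exact hA0
    · by_cases h2 : τ = σ'
      · have : f' τ = f σ' + t * B := by simp [hf'def, h1, h2, hσ'ne]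
        rw [this]
        exact add_nonneg (hffeas σ' (h2 ▸ hτ)) (mul_nonneg ht0.le hB0)
      · simp only [hf'def, if_neg h1, if_neg h2]; exact hffeas τ hτ
  have hx'meas : ∀ τ k, Measurable (x' τ k) := by
    intro τ k
    simp only [hx'def]
    split_ifs
    · exact measurable_const.mul (hxmeas σ k)
    · exact hxmeas σ k
    · exact (hxmeas σ' k).add (measurable_const.mul (hxmeas σ k))
    · exact hxmeas σ' k
    · exact hxmeas τ k
  have hx'pos : ∀ τ k ξ, 0 ≤ x' τ k ξ := by
    intro τ k ξ
    simp only [hx'def]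
    split_ifs
    · exact mul_nonneg (by linarith) (hxpos σ k ξ)
    · exact hxpos σ k ξ
    · exact add_nonneg (hxpos σ' k ξ) (mul_nonneg ht0.le (hxpos σ k ξ))
    · exact hxpos σ' k ξ
    · exact hxpos τ k ξ
  have hx'supp : ∀ τ k, τ ∉ States ∨ k ∉ τ → x' τ k = 0 := by
    intro τ k hτk
    funext ξ
    by_cases h1 : τ = σ
    · have hkσ : k ∉ σ := by
        rcases hτk with h | h
        · exact absurd (h1 ▸ hσ) h
        · exact h1 ▸ h
      have hk' : k ∉ σ' := fun h => hkσ (hσ'sub h)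
      have h0 : x σ k = 0 := hxsupp σ k (Or.inr hkσ)
      simp [hx'def, h1, hk', h0]
    · by_cases h2 : τ = σ'
      · have hk' : k ∉ σ' := by
          intro hk
        -- τ = σ'
          rcases hτk with h | h
          · exact h (h2 ▸ ((hStmem σ').2 ⟨k, hk⟩ : σ' ∈ States))
          · exact h (h2 ▸ hk)
        have h0 : x σ' k = 0 := hxsupp σ' k (h2 ▸ hτk)
        simp [hx'def, h1, h2, hσ'ne, hk', h0]
      · have h0 : x τ k = 0 := hxsupp τ k hτk
        simp [hx'def, h1, h2, h0]
  -- pointwise sums are unchanged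
  have hS : ∀ (k : Fin L) ξ, ∑ τ ∈ States.filter (fun τ => k ∈ τ), x' τ k ξ
      = ∑ τ ∈ States.filter (fun τ => k ∈ τ), x τ k ξ := by
    intro k ξ
    by_cases hk : k ∈ σ'
    · have hkσ : k ∈ σ := hσ'sub hk
      have hmem1 : σ ∈ States.filter (fun τ => k ∈ τ) :=
        Finset.mem_filter.2 ⟨hσ, hkσ⟩
      have hmem2 : σ' ∈ States.filter (fun τ => k ∈ τ) :=
        Finset.mem_filter.2 ⟨(hStmem σ').2 ⟨k, hk⟩, hk⟩
      have hsub : ({σ, σ'} : Finset (Finset (Fin L))) ⊆ States.filter (fun τ => k ∈ τ) := by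
        intro τ hτ
        rcases Finset.mem_insert.1 hτ with h | h
        · exact h ▸ hmem1
        · exact (Finset.mem_singleton.1 h) ▸ hmem2
      have key : ∑ τ ∈ States.filter (fun τ => k ∈ τ), (x' τ k ξ - x τ k ξ)
          = ∑ τ ∈ ({σ, σ'} : Finset (Finset (Fin L))), (x' τ k ξ - x τ k ξ) := by
        refine (Finset.sum_subset hsub fun τ _ hτ => ?_).symm
        have h1 : τ ≠ σ := fun h => hτ (by simp [h])
        have h2 : τ ≠ σ' := fun h => hτ (by simp [h])
        simp [hx'def, h1, h2]
      have hpair : ∑ τ ∈ ({σ, σ'} : Finset (Finset (Fin L))), (x' τ k ξ - x τ k ξ) = 0 := by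
        rw [Finset.sum_pair hσσ']
        have e1 : x' σ k ξ = (1 - t) * x σ k ξ := by simp [hx'def, hk]
        have e2 : x' σ' k ξ = x σ' k ξ + t * x σ k ξ := by simp [hx'def, hσ'ne, hk]
        rw [e1, e2]
        ring
      have hfin : (∑ τ ∈ States.filter (fun τ => k ∈ τ), x' τ k ξ)
          - ∑ τ ∈ States.filter (fun τ => k ∈ τ), x τ k ξ = 0 := by
        rw [← Finset.sum_sub_distrib, key, hpair]
      linarith
    · refine Finset.sum_congr rfl fun τ hτ => ?_
      have hkτ : k ∈ τ := (Finset.mem_filter.1 hτ).2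
      by_cases h1 : τ = σ
      · simp [hx'def, h1, hk]
      · by_cases h2 : τ = σ'
        · exact absurd (h2 ▸ hkτ) hk
        · simp [hx'def, h1, h2]
  have hx'D : ∀ k ξ, ∑ τ ∈ States.filter (fun τ => k ∈ τ), x' τ k ξ ≤ D := by
    intro k ξ; rw [hS k ξ]; exact hxD k ξ
  -- time constraints for (f', x')
  have hxf' : ∀ τ ∈ States, ∀ k ∈ τ, (∫ ξ in Cp k, x' τ k ξ / R τ k ξ ∂μ) ≤ f' τ := by
    intro τ hτ k hk
    by_cases h1 : τ = σ
    · rw [h1] at hk ⊢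
      by_cases h2 : k ∈ σ'
      · have hx'eq : ∀ ξ, x' σ k ξ = (1 - t) * x σ k ξ := by
          intro ξ; simp [hx'def, h2]
        have hf'eq : f' σ = A := by simp [hf'def]
        rw [hf'eq]
        have hcalc : (∫ ξ in Cp k, x' σ k ξ / R σ k ξ ∂μ)
            = (1 - t) * ∫ ξ in Cp k, x σ k ξ / R σ k ξ ∂μ := by
          simp_rw [hx'eq, mul_div_assoc]
          exact integral_const_mul (1 - t) _
        rw [hcalc, ← htA]
        exact mul_le_mul_of_nonneg_left (hxf σ hσ k (hσ'sub h2)) (by linarith)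
      · have hkl : k = ℓ := by
          by_contra hne2
          exact h2 (Finset.mem_erase.2 ⟨hne2, hk⟩)
        rw [hkl]
        have hx'eq : ∀ ξ, x' σ ℓ ξ = x σ ℓ ξ := by
          intro ξ; simp [hx'def, hℓσ']
        have hf'eq : f' σ = A := by simp [hf'def]
        rw [hf'eq]
        simp_rw [hx'eq]
        exact le_of_eq hAdef.symm
    · by_cases h2 : τ = σ'
      · rw [h2] at hk ⊢
        have hx'eq : ∀ ξ, x' σ' k ξ = x σ' k ξ + t * x σ k ξ := by
          intro ξ; simp [hx'def, hσ'ne, hk]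
        have hf'eq : f' σ' = f σ' + t * B := by
          simp [hf'def, hσ'ne]
        rw [hf'eq]
        have hsplit : (∫ ξ in Cp k, x' σ' k ξ / R σ' k ξ ∂μ)
            = (∫ ξ in Cp k, x σ' k ξ / R σ' k ξ ∂μ)
              + t * ∫ ξ in Cp k, x σ k ξ / R σ' k ξ ∂μ := by
          simp_rw [hx'eq, add_div, mul_div_assoc]
          rw [integral_add (hintOn σ' σ' k) ((hintOn σ σ' k).const_mul t)]
          rw [integral_const_mul]
        rw [hsplit]
        have h3 := hxf σ' (h2 ▸ hτ) k hk
        have h4 := mul_le_mul_of_nonneg_left (hBg k hk) ht0.le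
        linarith
      · have hx'eq : ∀ ξ, x' τ k ξ = x τ k ξ := by
          intro ξ; simp [hx'def, h1, h2]
        have hf'eq : f' τ = f τ := by simp [hf'def, h1, h2]
        rw [hf'eq]
        simp_rw [hx'eq]
        exact hxf τ hτ k hk
  -- apply optimality
  have hopt' := hopt f' x' hf'pos hx'meas hx'pos hx'supp hx'D hxf'
  have hMeq : (∑ k, ∫ ξ in Cp k, (D - ∑ τ ∈ States.filter (fun τ => k ∈ τ), x' τ k ξ) / Smac ξ ∂μ)
      = ∑ k, ∫ ξ in Cp k, (D - ∑ τ ∈ States.filter (fun τ => k ∈ τ), x τ k ξ) / Smac ξ ∂μ := by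
    refine Finset.sum_congr rfl fun k _ => ?_
    refine integral_congr_ae (Filter.Eventually.of_forall fun ξ => ?_)
    simp only [hS k ξ]
  rw [hMeq] at hopt'
  have hsum_le : (∑ τ ∈ States, f τ) ≤ ∑ τ ∈ States, f' τ := by linarith
  -- strict decrease of the objective: contradiction
  have hdiff : ∑ τ ∈ States, (f' τ - f τ) < 0 := by
    by_cases hS' : σ' ∈ States
    · have hsub : ({σ, σ'} : Finset (Finset (Fin L))) ⊆ States := by
        intro τ hτ
        rcases Finset.mem_insert.1 hτ with h | h
        · exact h ▸ hσ
        · exact (Finset.mem_singleton.1 h) ▸ hS'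
      have hkey : ∑ τ ∈ States, (f' τ - f τ)
          = ∑ τ ∈ ({σ, σ'} : Finset (Finset (Fin L))), (f' τ - f τ) := by
        refine (Finset.sum_subset hsub fun τ _ hτ => ?_).symm
        have h1 : τ ≠ σ := fun h => hτ (by simp [h])
        have h2 : τ ≠ σ' := fun h => hτ (by simp [h])
        simp [hf'def, h1, h2]
      rw [hkey, Finset.sum_pair hσσ']
      have hBlt' : B < f σ := hBlt ((hStmem σ').1 hS')
      have hfe1 : f' σ = A := by simp [hf'def]
      have hfe2 : f' σ' = f σ' + t * B := by simp [hf'def, hσ'ne]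
      rw [hfe1, hfe2]
      have hmp : 0 < t * (f σ - B) := mul_pos ht0 (sub_pos.2 hBlt')
      nlinarith [htA]
    · have hkey : ∑ τ ∈ States, (f' τ - f τ)
          = ∑ τ ∈ ({σ} : Finset (Finset (Fin L))), (f' τ - f τ) := by
        refine (Finset.sum_subset (by simpa using hσ) fun τ hτS hτ => ?_).symm
        have h1 : τ ≠ σ := by simpa using hτ
        have h2 : τ ≠ σ' := fun h => hS' (h ▸ hτS)
        simp [hf'def, h1, h2]
      rw [hkey, Finset.sum_singleton]
      have hfe1 : f' σ = A := by simp [hf'def]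
      rw [hfe1]
      linarith
  rw [Finset.sum_sub_distrib] at hdiff
  linarith
end
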